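/- Let r ∈ ℕ. For all x, y ∈ ℂ with 0 < |x| < 1 (and |q^r x| < 1 automatically), the r-fold q-derivative in x of Φ₁ satisfies (D_{x,q}^r Φ₁(a,b;c;q;·,y))(x) = ((a;q)_r (b;q)_r / ((c;q)_r (1−q)^r)) · Φ₁(a q^r, b q^r; c q^r; q; x, y). -/

import Mathlib

/-! Termwise, `D_q x^(n+1) = (1 - q^(n+1)) / (1 - q) · x^n`; the factor `1 - q^(n+1)` cancels the
last factor of `(q;q)_(n+1)`, and splitting off the first factor of `(a;q)`, `(b;q)`, `(c;q)`
turns the shifted series into `Φ₁(aq, bq; cq)`. Iterating gives the `r`-fold formula.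

Convergence: for `|q| < 1` each `(a;q)_n` tends to `(a;q)_∞`, which is nonzero unless `a q^m = 1`
for some `m`. So the series converges when `|y| < 1` or `a q^m = 1` (then it is a polynomial),
while for `|y| ≥ 1` and non-terminating `a` its `n = 0` slice does not tend to zero. In that case
both sides of the identity are the value `0` that `tsum` assigns to a divergent series. -/

open scoped BigOperators

noncomputable section

/-- The q-shifted factorial `(a;q)_n = ∏_{r=0}^{n-1} (1 - a q^r)`. -/
def qPoch (q a : ℂ) (n : ℕ) : ℂ := ∏ r ∈ Finset.range n, (1 - a * q ^ r)

/-- The basic Humbert function `Φ₁(a,b;c;q;x,y)` as a double series over `ℕ × ℕ`. -/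
def Phi1 (q a b c x y : ℂ) : ℂ :=
  ∑' p : ℕ × ℕ,
    qPoch q a (p.1 + p.2) * qPoch q b p.1 * x ^ p.1 * y ^ p.2 /
      (qPoch q c (p.1 + p.2) * qPoch q q p.1 * qPoch q q p.2)

/-- The basic Humbert function `Φ₂(a,b;c;q;x,y)` as a double series over `ℕ × ℕ`. -/
def Phi2 (q a b c x y : ℂ) : ℂ :=
  ∑' p : ℕ × ℕ,
    qPoch q a p.1 * qPoch q b p.2 * x ^ p.1 * y ^ p.2 /
      (qPoch q c (p.1 + p.2) * qPoch q q p.1 * qPoch q q p.2)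

/-- The basic Humbert function `Φ₃(a;b;q;x,y)` as a double series over `ℕ × ℕ`. -/
def Phi3 (q a b x y : ℂ) : ℂ :=
  ∑' p : ℕ × ℕ,
    qPoch q a p.1 * x ^ p.1 * y ^ p.2 /
      (qPoch q b (p.1 + p.2) * qPoch q q p.1 * qPoch q q p.2)

/-- The one-variable q-difference operator. -/
def qDiff (q : ℂ) (f : ℂ → ℂ) : ℂ → ℂ := fun x => (f x - f (q * x)) / ((1 - q) * x)

/-- The q-difference operator in the first variable of a two-variable function. -/
def qDx (q : ℂ) (f : ℂ → ℂ → ℂ) : ℂ → ℂ → ℂ :=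
  fun x y => (f x y - f (q * x) y) / ((1 - q) * x)

/-- The q-difference operator in the second variable of a two-variable function. -/
def qDy (q : ℂ) (f : ℂ → ℂ → ℂ) : ℂ → ℂ → ℂ :=
  fun x y => (f x y - f x (q * y)) / ((1 - q) * y)

/-- The infinite q-shifted factorial `(a;q)_∞ = ∏_{r=0}^∞ (1 - a q^r)`. -/
def qPochInf (q a : ℂ) : ℂ := ∏' r : ℕ, (1 - a * q ^ r)

open Filter Topology

lemma exists_pos_le_norm_of_tendsto {E : Type*} [NormedAddCommGroup E] {u : ℕ → E} {L : E}
    (hu : Tendsto u atTop (𝓝 L)) (hL : L ≠ 0) (h : ∀ n, u n ≠ 0) :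
    ∃ δ > 0, ∀ n, δ ≤ ‖u n‖ := by
  obtain ⟨M, hM⟩ := (hu.norm.inv₀ (norm_ne_zero_iff.2 hL)).bddAbove_range
  have hM0 : 0 < M := (inv_pos.2 (norm_pos_iff.2 (h 0))).trans_le (hM ⟨0, rfl⟩)
  exact ⟨M⁻¹, inv_pos.2 hM0, fun n => (inv_le_comm₀ (norm_pos_iff.2 (h n)) hM0).1 (hM ⟨n, rfl⟩)⟩

lemma mul_pow_ne_one_of_ne_zpow_neg {q c : ℂ} (hc : ∀ m : ℕ, c ≠ q ^ (-(m : ℤ))) (n : ℕ) :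
    c * q ^ n ≠ 1 := fun h => hc n (by simpa using eq_inv_of_mul_eq_one_left h)

section qPoch

variable {q : ℂ}

lemma qPoch_zero (q a : ℂ) : qPoch q a 0 = 1 := Finset.prod_range_zero _

lemma qPoch_succ (q a : ℂ) (n : ℕ) : qPoch q a (n + 1) = qPoch q a n * (1 - a * q ^ n) :=
  Finset.prod_range_succ _ _

lemma qPoch_succ' (q a : ℂ) (n : ℕ) : qPoch q a (n + 1) = (1 - a) * qPoch q (a * q) n := by
  rw [qPoch, Finset.prod_range_succ', pow_zero, mul_one, mul_comm]
  exact congrArg _ (Finset.prod_congr rfl fun i _ => by ring)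

lemma qPoch_ne_zero {a : ℂ} (ha : ∀ n : ℕ, a * q ^ n ≠ 1) (n : ℕ) : qPoch q a n ≠ 0 :=
  Finset.prod_ne_zero_iff.2 fun i _ => sub_ne_zero.2 (ha i).symm

lemma qPoch_eq_zero_of_lt {a : ℂ} {m n : ℕ} (ha : a * q ^ m = 1) (h : m < n) :
    qPoch q a n = 0 :=
  Finset.prod_eq_zero (Finset.mem_range.2 h) (sub_eq_zero.2 ha.symm)

lemma q_mul_pow_ne_one (hq : ‖q‖ < 1) (n : ℕ) : q * q ^ n ≠ 1 := by
  rw [← pow_succ']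
  intro h
  exact (pow_lt_one₀ (norm_nonneg q) hq n.succ_ne_zero).ne (by simpa using congrArg norm h)

lemma summable_norm_neg_mul_pow (hq : ‖q‖ < 1) (a : ℂ) :
    Summable fun i : ℕ => ‖-(a * q ^ i)‖ := by
  simpa only [norm_neg, norm_mul, norm_pow] using
    (summable_geometric_of_lt_one (norm_nonneg q) hq).mul_left ‖a‖

lemma tendsto_qPoch (hq : ‖q‖ < 1) (a : ℂ) :
    Tendsto (qPoch q a) atTop (𝓝 (qPochInf q a)) := by
  have h :=
    (multipliable_one_add_of_summable (summable_norm_neg_mul_pow hq a)).hasProd.tendsto_prod_nat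
  simp only [← sub_eq_add_neg] at h
  exact h

lemma qPochInf_ne_zero (hq : ‖q‖ < 1) {a : ℂ} (ha : ∀ n : ℕ, a * q ^ n ≠ 1) :
    qPochInf q a ≠ 0 := by
  simpa only [qPochInf, sub_eq_add_neg] using tprod_one_add_ne_zero_of_summable
    (fun i => by simpa only [← sub_eq_add_neg] using sub_ne_zero.2 (ha i).symm)
    (summable_norm_neg_mul_pow hq a)

lemma exists_norm_qPoch_le (hq : ‖q‖ < 1) (a : ℂ) : ∃ C, ∀ n, ‖qPoch q a n‖ ≤ C := by
  obtain ⟨C, hC⟩ := (tendsto_qPoch hq a).norm.bddAbove_range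
  exact ⟨C, fun n => hC ⟨n, rfl⟩⟩

lemma exists_pos_le_norm_qPoch (hq : ‖q‖ < 1) {a : ℂ} (ha : ∀ n : ℕ, a * q ^ n ≠ 1) :
    ∃ δ > 0, ∀ n, δ ≤ ‖qPoch q a n‖ :=
  exists_pos_le_norm_of_tendsto (tendsto_qPoch hq a) (qPochInf_ne_zero hq ha) (qPoch_ne_zero ha)

end qPoch

def phi1Term (q a b c x y : ℂ) (p : ℕ × ℕ) : ℂ :=
  qPoch q a (p.1 + p.2) * qPoch q b p.1 * x ^ p.1 * y ^ p.2 /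
    (qPoch q c (p.1 + p.2) * qPoch q q p.1 * qPoch q q p.2)

section phi1Term

variable {q a b c x y : ℂ}

lemma Phi1_eq_tsum : Phi1 q a b c x y = ∑' p, phi1Term q a b c x y p := rfl

lemma phi1Term_zero_fst (k : ℕ) :
    phi1Term q a b c x y (0, k) = qPoch q a k / (qPoch q c k * qPoch q q k) * y ^ k := by
  simp only [phi1Term, qPoch_zero, zero_add, pow_zero]
  ring

lemma phi1Term_q_mul (p : ℕ × ℕ) :
    phi1Term q a b c (q * x) y p = q ^ p.1 * phi1Term q a b c x y p := by
  simp only [phi1Term, mul_pow]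
  ring

lemma one_sub_pow_mul_phi1Term_succ_fst (hq : ‖q‖ < 1) (hx : x ≠ 0) (n k : ℕ) :
    (1 - q ^ (n + 1)) * phi1Term q a b c x y (n + 1, k) / ((1 - q) * x) =
      (1 - a) * (1 - b) / ((1 - c) * (1 - q)) *
        phi1Term q (a * q) (b * q) (c * q) x y (n, k) := by
  have hqn : 1 - q * q ^ n ≠ 0 := sub_ne_zero.2 (q_mul_pow_ne_one hq n).symm
  have key : (1 - q ^ (n + 1)) * phi1Term q a b c x y (n + 1, k) / ((1 - q) * x) =
      (1 - a) * (1 - b) / ((1 - c) * (1 - q)) * phi1Term q (a * q) (b * q) (c * q) x y (n, k) *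
        ((1 - q * q ^ n) / (1 - q * q ^ n) * (x / x)) := by
    simp only [phi1Term]
    rw [Nat.add_right_comm n 1 k, qPoch_succ q q n, qPoch_succ' q a, qPoch_succ' q b,
      qPoch_succ' q c, pow_succ', pow_succ x]
    simp only [div_eq_mul_inv, mul_inv]
    ring
  rw [key, div_self hqn, div_self hx, mul_one, mul_one]

lemma summable_phi1Term_of_norm_lt_one (hq : ‖q‖ < 1) (hc : ∀ n : ℕ, c * q ^ n ≠ 1)
    (hx : ‖x‖ < 1) (hy : ‖y‖ < 1) : Summable (phi1Term q a b c x y) := by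
  obtain ⟨A, hA⟩ := exists_norm_qPoch_le hq a
  obtain ⟨B, hB⟩ := exists_norm_qPoch_le hq b
  obtain ⟨γ, hγ, hC⟩ := exists_pos_le_norm_qPoch hq hc
  obtain ⟨δ, hδ, hQ⟩ := exists_pos_le_norm_qPoch hq (q_mul_pow_ne_one hq)
  have hA0 : 0 ≤ A := (norm_nonneg _).trans (hA 0)
  have hB0 : 0 ≤ B := (norm_nonneg _).trans (hB 0)
  have hgeom : Summable fun p : ℕ × ℕ => ‖x‖ ^ p.1 * ‖y‖ ^ p.2 :=
    (summable_geometric_of_lt_one (norm_nonneg _) hx).mul_of_nonneg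
      (summable_geometric_of_lt_one (norm_nonneg _) hy) (fun _ => by positivity)
      (fun _ => by positivity)
  refine (hgeom.mul_left (A * B / (γ * δ * δ))).of_norm_bounded fun ⟨n, k⟩ => ?_
  calc ‖phi1Term q a b c x y (n, k)‖
        = ‖qPoch q a (n + k)‖ * ‖qPoch q b n‖ * (‖x‖ ^ n * ‖y‖ ^ k) /
          (‖qPoch q c (n + k)‖ * ‖qPoch q q n‖ * ‖qPoch q q k‖) := by
        simp only [phi1Term, norm_div, norm_mul, norm_pow, mul_assoc]
    _ ≤ A * B * (‖x‖ ^ n * ‖y‖ ^ k) / (γ * δ * δ) := by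
        gcongr
        exacts [hA _, hB _, hC _, hQ _, hQ _]
    _ = _ := by ring

lemma summable_phi1Term_of_mul_pow_eq_one {m : ℕ} (ha : a * q ^ m = 1) :
    Summable (phi1Term q a b c x y) := by
  refine summable_of_ne_finset_zero (s := Finset.range (m + 1) ×ˢ Finset.range (m + 1))
    fun ⟨n, k⟩ hp => ?_
  simp only [Finset.mem_product, Finset.mem_range, not_and_or, not_lt] at hp
  rw [phi1Term, qPoch_eq_zero_of_lt ha (by omega)]
  simp

lemma summable_phi1Term (hq : ‖q‖ < 1) (hc : ∀ n : ℕ, c * q ^ n ≠ 1) (hx : ‖x‖ < 1)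
    (h : ‖y‖ < 1 ∨ ∃ m : ℕ, a * q ^ m = 1) : Summable (phi1Term q a b c x y) := by
  rcases h with hy | ⟨m, ha⟩
  · exact summable_phi1Term_of_norm_lt_one hq hc hx hy
  · exact summable_phi1Term_of_mul_pow_eq_one ha

lemma not_summable_phi1Term (hq : ‖q‖ < 1) (ha : ∀ n : ℕ, a * q ^ n ≠ 1)
    (hc : ∀ n : ℕ, c * q ^ n ≠ 1) (hy : 1 ≤ ‖y‖) : ¬Summable (phi1Term q a b c x y) := by
  intro hs
  have hQ := qPochInf_ne_zero hq (q_mul_pow_ne_one hq)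
  have hlim : Tendsto (fun k => qPoch q a k / (qPoch q c k * qPoch q q k)) atTop
      (𝓝 (qPochInf q a / (qPochInf q c * qPochInf q q))) :=
    (tendsto_qPoch hq a).div ((tendsto_qPoch hq c).mul (tendsto_qPoch hq q))
      (mul_ne_zero (qPochInf_ne_zero hq hc) hQ)
  have hterm := (hs.comp_injective (Prod.mk_right_injective 0)).tendsto_atTop_zero
  have hlim0 : Tendsto (fun k => qPoch q a k / (qPoch q c k * qPoch q q k)) atTop (𝓝 0) := by
    refine squeeze_zero_norm (fun k => ?_) (by simpa using hterm.norm)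
    rw [phi1Term_zero_fst, norm_mul, norm_pow]
    exact le_mul_of_one_le_right (norm_nonneg _) (one_le_pow₀ hy)
  exact div_ne_zero (qPochInf_ne_zero hq ha) (mul_ne_zero (qPochInf_ne_zero hq hc) hQ)
    (tendsto_nhds_unique hlim hlim0)

end phi1Term

section qDiff

variable {q a b c x y : ℂ}

lemma qDiff_Phi1_of_summable (hq : ‖q‖ < 1) (hx : x ≠ 0) (hs : Summable (phi1Term q a b c x y))
    (hs' : Summable (phi1Term q a b c (q * x) y)) :
    qDiff q (fun t => Phi1 q a b c t y) x =
      (1 - a) * (1 - b) / ((1 - c) * (1 - q)) * Phi1 q (a * q) (b * q) (c * q) x y := by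
  set g : ℕ × ℕ → ℂ := fun p => (1 - q ^ p.1) * phi1Term q a b c x y p / ((1 - q) * x)
  have hdiff : qDiff q (fun t => Phi1 q a b c t y) x = ∑' p, g p := by
    simp only [qDiff, Phi1_eq_tsum]
    rw [← hs.tsum_sub hs', ← tsum_div_const]
    exact tsum_congr fun p => by rw [phi1Term_q_mul]; ring
  have hsupp : Function.support g ⊆ Set.range (Prod.map (· + 1) id) := by
    rintro ⟨_ | n, k⟩ hp
    · simp [g] at hp
    · exact ⟨(n, k), rfl⟩
  rw [hdiff, ← ((add_left_injective 1).prodMap Function.injective_id).tsum_eq hsupp,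
    Phi1_eq_tsum, ← tsum_mul_left]
  exact tsum_congr fun p => one_sub_pow_mul_phi1Term_succ_fst hq hx p.1 p.2

lemma qDiff_Phi1 (hq : ‖q‖ < 1) (hc : ∀ n : ℕ, c * q ^ n ≠ 1) (hx : x ≠ 0) (hx1 : ‖x‖ < 1) :
    qDiff q (fun t => Phi1 q a b c t y) x =
      (1 - a) * (1 - b) / ((1 - c) * (1 - q)) * Phi1 q (a * q) (b * q) (c * q) x y := by
  by_cases h : ‖y‖ < 1 ∨ ∃ m : ℕ, a * q ^ m = 1
  · have hqx : ‖q * x‖ < 1 := by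
      rw [norm_mul]
      exact (mul_le_of_le_one_left (norm_nonneg x) hq.le).trans_lt hx1
    exact qDiff_Phi1_of_summable hq hx (summable_phi1Term hq hc hx1 h)
      (summable_phi1Term hq hc hqx h)
  · push Not at h
    obtain ⟨hy, ha⟩ := h
    have hshift : ∀ {d : ℂ}, (∀ n : ℕ, d * q ^ n ≠ 1) → ∀ n : ℕ, d * q * q ^ n ≠ 1 :=
      fun hd n => by rw [mul_assoc, ← pow_succ']; exact hd _
    have hzero : ∀ t, Phi1 q a b c t y = 0 := fun t =>
      tsum_eq_zero_of_not_summable (not_summable_phi1Term hq ha hc hy)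
    have hzero' : Phi1 q (a * q) (b * q) (c * q) x y = 0 :=
      tsum_eq_zero_of_not_summable (not_summable_phi1Term hq (hshift ha) (hshift hc) hy)
    simp [qDiff, hzero, hzero']

end qDiff

/-- r-fold q-derivative of Φ₁ in x. -/
theorem phi1_qderiv_x (q a b c : ℂ) (hq0 : 0 < ‖q‖) (hq1 : ‖q‖ < 1)
    (hc : ∀ m : ℕ, c ≠ q ^ (-(m : ℤ))) (r : ℕ) (x y : ℂ)
    (hx0 : 0 < ‖x‖) (hx1 : ‖x‖ < 1) :
    (qDiff q)^[r] (fun t => Phi1 q a b c t y) x =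
      qPoch q a r * qPoch q b r / (qPoch q c r * (1 - q) ^ r) *
        Phi1 q (a * q ^ r) (b * q ^ r) (c * q ^ r) x y := by
  have hc' := mul_pow_ne_one_of_ne_zpow_neg hc
  induction r generalizing x with
  | zero => simp [qPoch_zero]
  | succ r ih =>
    have hqx0 : 0 < ‖q * x‖ := by rw [norm_mul]; positivity
    have hqx1 : ‖q * x‖ < 1 := by
      rw [norm_mul]
      exact (mul_le_of_le_one_left hx0.le hq1.le).trans_lt hx1
    have hstep := qDiff_Phi1 (a := a * q ^ r) (b := b * q ^ r) (c := c * q ^ r) (y := y) hq1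
      (fun n => by rw [mul_assoc, ← pow_add]; exact hc' _) (norm_pos_iff.1 hx0) hx1
    simp only [qDiff] at hstep
    rw [Function.iterate_succ_apply', qDiff, ih x hx0 hx1, ih (q * x) hqx0 hqx1, ← mul_sub,
      mul_div_assoc, hstep, qPoch_succ, qPoch_succ, qPoch_succ, pow_succ q, pow_succ (1 - q)]
    simp only [← mul_assoc, div_eq_mul_inv, mul_inv]
    ring
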